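/- arXiv:1103.1790 — 6 statements merged into one kernel-verified Lean document; each statement's English description precedes it below -/
import Mathlib

section
/- Suppose there exists λ ∈ (0,1] such that for every measurable set A ⊆ X, λ·P(A) ≤ P'(A) ≤ (1/λ)·P(A), where P and P' are two marginal distributions on X. Let h be a measurable classifier, and let θ_h and θ'_h denote the disagreement coefficients of h with respect to a hypothesis class C under P and P' respectively (with r₀ = 0). Then λ²·θ_h ≤ θ'_h ≤ (1/λ²)·θ_h. -/
open MeasureTheory ENNReal Set

/-- Region of disagreement of a set of binary classifiers. -/
def DIS {X : Type*} (V : Set (X → Bool)) : Set X :=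
  {x | ∃ h₁ ∈ V, ∃ h₂ ∈ V, h₁ x ≠ h₂ x}

/-- The ball of radius `r` around `h` within the class `C`, under marginal `μ`. -/
def dball {X : Type*} [MeasurableSpace X] (C : Set (X → Bool)) (μ : Measure X)
    (h : X → Bool) (r : ℝ≥0∞) : Set (X → Bool) :=
  {h' ∈ C | μ {x | h x ≠ h' x} ≤ r}

/-- The disagreement coefficient of `h` with respect to `C` under `μ` (with `r₀ = 0`). -/
noncomputable def dcoef {X : Type*} [MeasurableSpace X] (C : Set (X → Bool)) (μ : Measure X)
    (h : X → Bool) : ℝ≥0∞ :=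
  ⨆ (r : ℝ≥0∞) (_ : 0 < r), μ (DIS (dball C μ h r)) / r

/-- Key one-sided estimate. -/
lemma dcoef_le_aux {X : Type*} [MeasurableSpace X] (P P' : Measure X)
    (C : Set (X → Bool)) (h : X → Bool) (lam : ℝ) (hl : 0 < lam)
    (H1 : ∀ A : Set X, P' A ≤ ENNReal.ofReal (1/lam) * P A)
    (H2 : ∀ A : Set X, ENNReal.ofReal lam * P A ≤ P' A) :
    dcoef C P' h ≤ ENNReal.ofReal (1/lam^2) * dcoef C P h := by
  set c := ENNReal.ofReal (1/lam) with hc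
  have hc0 : c ≠ 0 := by
    positivity
  have hctop : c ≠ ∞ := ENNReal.ofReal_ne_top
  have hcl : c * ENNReal.ofReal lam = 1 := by
    rw [hc, ← ENNReal.ofReal_mul (by positivity)]
    rw [one_div, inv_mul_cancel₀ hl.ne']
    simp
  have hsq : ENNReal.ofReal (1/lam^2) = c * c := by
    rw [hc, ← ENNReal.ofReal_mul (by positivity)]
    congr 1
    field_simp
  refine iSup₂_le fun r hr => ?_
  have hr' : 0 < c * r := ENNReal.mul_pos hc0 hr.ne'
  have hsub : dball C P' h r ⊆ dball C P h (c * r) := by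
    rintro h' ⟨hC, hler⟩
    refine ⟨hC, ?_⟩
    calc P {x | h x ≠ h' x} = c * (ENNReal.ofReal lam * P {x | h x ≠ h' x}) := by
          rw [← mul_assoc, hcl, one_mul]
      _ ≤ c * r := mul_le_mul_right ((H2 _).trans hler) c
  have hS : DIS (dball C P' h r) ⊆ DIS (dball C P h (c*r)) := by
    rintro x ⟨h₁, h₁m, h₂, h₂m, hne⟩
    exact ⟨h₁, hsub h₁m, h₂, hsub h₂m, hne⟩
  calc P' (DIS (dball C P' h r)) / r
      ≤ c * P (DIS (dball C P h (c*r))) / r :=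
        ENNReal.div_le_div_right ((H1 _).trans (mul_le_mul_right (measure_mono hS) c)) r
    _ = ENNReal.ofReal (1/lam^2) * (P (DIS (dball C P h (c*r))) / (c*r)) := by
        rw [hsq, div_eq_mul_inv, div_eq_mul_inv, ENNReal.mul_inv (Or.inl hc0) (Or.inl hctop)]
        calc c * P (DIS (dball C P h (c*r))) * r⁻¹
            = (c * c⁻¹) * (c * (P (DIS (dball C P h (c*r))) * r⁻¹)) := by
              rw [ENNReal.mul_inv_cancel hc0 hctop, one_mul]; ring
          _ = c * c * (P (DIS (dball C P h (c*r))) * (c⁻¹ * r⁻¹)) := by ring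
    _ ≤ ENNReal.ofReal (1/lam^2) * dcoef C P h := by
        refine mul_le_mul_right ?_ _
        exact le_iSup₂ (f := fun (r : ℝ≥0∞) (_ : 0 < r) => P (DIS (dball C P h r)) / r)
          (c * r) hr'

/-- Close marginals: if `λ·P(A) ≤ P'(A) ≤ (1/λ)·P(A)` for all measurable `A`, then
`λ²·θ_h ≤ θ'_h ≤ (1/λ²)·θ_h`. -/
theorem close_marginals_disagreement_coefficient
    {X : Type*} [MeasurableSpace X]
    (P P' : Measure X) [IsProbabilityMeasure P] [IsProbabilityMeasure P']
    (C : Set (X → Bool)) (h : X → Bool)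
    (lam : ℝ) (hlam : lam ∈ Set.Ioc (0:ℝ) 1)
    (hle : ∀ A : Set X, MeasurableSet A →
      ENNReal.ofReal lam * P A ≤ P' A ∧ P' A ≤ ENNReal.ofReal (1/lam) * P A) :
    ENNReal.ofReal (lam^2) * dcoef C P h ≤ dcoef C P' h ∧
      dcoef C P' h ≤ ENNReal.ofReal (1/lam^2) * dcoef C P h := by
  obtain ⟨hl, hl1⟩ := hlam
  -- extend the inequalities to all (possibly nonmeasurable) sets
  have H1 : ∀ A : Set X, P' A ≤ ENNReal.ofReal (1/lam) * P A := by
    intro A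
    calc P' A ≤ P' (toMeasurable P A) := measure_mono (subset_toMeasurable P A)
      _ ≤ ENNReal.ofReal (1/lam) * P (toMeasurable P A) :=
          (hle _ (measurableSet_toMeasurable P A)).2
      _ = ENNReal.ofReal (1/lam) * P A := by rw [measure_toMeasurable]
  have H2 : ∀ A : Set X, ENNReal.ofReal lam * P A ≤ P' A := by
    intro A
    calc ENNReal.ofReal lam * P A ≤ ENNReal.ofReal lam * P (toMeasurable P' A) :=
          mul_le_mul_right (measure_mono (subset_toMeasurable P' A)) _
      _ ≤ P' (toMeasurable P' A) := (hle _ (measurableSet_toMeasurable P' A)).1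
      _ = P' A := measure_toMeasurable A
  have hcl : ENNReal.ofReal (1/lam) * ENNReal.ofReal lam = 1 := by
    rw [← ENNReal.ofReal_mul (by positivity), one_div, inv_mul_cancel₀ hl.ne']
    simp
  -- swapped versions
  have H1' : ∀ A : Set X, P A ≤ ENNReal.ofReal (1/lam) * P' A := by
    intro A
    calc P A = ENNReal.ofReal (1/lam) * (ENNReal.ofReal lam * P A) := by
          rw [← mul_assoc, hcl, one_mul]
      _ ≤ ENNReal.ofReal (1/lam) * P' A := mul_le_mul_right (H2 A) _
  have H2' : ∀ A : Set X, ENNReal.ofReal lam * P' A ≤ P A := by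
    intro A
    calc ENNReal.ofReal lam * P' A ≤ ENNReal.ofReal lam * (ENNReal.ofReal (1/lam) * P A) :=
          mul_le_mul_right (H1 A) _
      _ = P A := by rw [← mul_assoc, mul_comm (ENNReal.ofReal lam), hcl, one_mul]
  have key2 : dcoef C P' h ≤ ENNReal.ofReal (1/lam^2) * dcoef C P h :=
    dcoef_le_aux P P' C h lam hl H1 H2
  have key1 : dcoef C P h ≤ ENNReal.ofReal (1/lam^2) * dcoef C P' h :=
    dcoef_le_aux P' P C h lam hl H1' H2'
  have hsq : ENNReal.ofReal (lam^2) * ENNReal.ofReal (1/lam^2) = 1 := by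
    rw [← ENNReal.ofReal_mul (by positivity)]
    rw [mul_one_div, div_self (by positivity)]
    simp
  constructor
  · calc ENNReal.ofReal (lam^2) * dcoef C P h
        ≤ ENNReal.ofReal (lam^2) * (ENNReal.ofReal (1/lam^2) * dcoef C P' h) :=
          mul_le_mul_right key1 _
      _ = dcoef C P' h := by rw [← mul_assoc, hsq, one_mul]
  · exact key2
end

section
/- Suppose there exists α ∈ [0,1] such that for every measurable set A ⊆ X, P(A) = α·P₁(A) + (1-α)·P₂(A), where P, P₁, P₂ are probability measures on X. For a measurable classifier h, let θ_h^(1), θ_h^(2), and θ_h denote the disagreement coefficients of h with respect to C under P₁, P₂, and P respectively. Then θ_h ≤ θ_h^(1) + θ_h^(2). -/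
open MeasureTheory ENNReal Set

lemma DIS_mono {X : Type*} {V W : Set (X → Bool)} (hVW : V ⊆ W) : DIS V ⊆ DIS W := by
  rintro x ⟨h₁, h1V, h₂, h2V, hne⟩
  exact ⟨h₁, hVW h1V, h₂, hVW h2V, hne⟩

lemma aux_term {X : Type*} [MeasurableSpace X] (P Q : Measure X)
    (C : Set (X → Bool)) (h : X → Bool) (a : ℝ≥0∞) (ha : a ≠ ∞)
    (hle : ∀ A : Set X, a * Q A ≤ P A) (r : ℝ≥0∞) (hr : 0 < r) (hrt : r ≠ ∞) :
    a * Q (DIS (dball C P h r)) / r ≤ dcoef C Q h := by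
  rcases eq_or_ne a 0 with rfl | ha0
  · simp
  · set s := r / a with hs_def
    have hs : 0 < s := ENNReal.div_pos hr.ne' ha
    have hsub : dball C P h r ⊆ dball C Q h s := by
      rintro h' ⟨hC, hP⟩
      refine ⟨hC, ?_⟩
      rw [ENNReal.le_div_iff_mul_le (Or.inl ha0) (Or.inl ha), mul_comm]
      exact le_trans (hle _) hP
    have hmono : Q (DIS (dball C P h r)) ≤ Q (DIS (dball C Q h s)) :=
      measure_mono (DIS_mono hsub)
    have hinv : s⁻¹ = a * r⁻¹ := by
      rw [hs_def, div_eq_mul_inv, ENNReal.mul_inv (Or.inl hr.ne') (Or.inl hrt),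
        inv_inv, mul_comm]
    have key : a * Q (DIS (dball C Q h s)) / r = Q (DIS (dball C Q h s)) / s := by
      rw [div_eq_mul_inv, div_eq_mul_inv, hinv]
      ring
    calc a * Q (DIS (dball C P h r)) / r ≤ a * Q (DIS (dball C Q h s)) / r := by
          gcongr
      _ = Q (DIS (dball C Q h s)) / s := key
      _ ≤ dcoef C Q h := by
          apply le_iSup₂_of_le s hs
          exact le_rfl

/-- Finite mixtures: if `P = α·P₁ + (1−α)·P₂`, then `θ_h ≤ θ_h^(1) + θ_h^(2)`. -/
theorem mixture_disagreement_coefficient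
    {X : Type*} [MeasurableSpace X]
    (P P₁ P₂ : Measure X) [IsProbabilityMeasure P] [IsProbabilityMeasure P₁]
    [IsProbabilityMeasure P₂]
    (C : Set (X → Bool)) (h : X → Bool)
    (α : ℝ) (hα : α ∈ Set.Icc (0:ℝ) 1)
    (hmix : ∀ A : Set X, MeasurableSet A →
      P A = ENNReal.ofReal α * P₁ A + ENNReal.ofReal (1-α) * P₂ A) :
    dcoef C P h ≤ dcoef C P₁ h + dcoef C P₂ h := by
  set a := ENNReal.ofReal α with ha_def
  set b := ENNReal.ofReal (1-α) with hb_def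
  have hPeq : P = a • P₁ + b • P₂ := by
    ext A hA
    simp [hmix A hA, Measure.add_apply, Measure.smul_apply, smul_eq_mul]
  have hmix' : ∀ A : Set X, P A = a * P₁ A + b * P₂ A := by
    intro A
    rw [hPeq]
    simp [Measure.add_apply, Measure.smul_apply, smul_eq_mul]
  have haT : a ≠ ∞ := ENNReal.ofReal_ne_top
  have hbT : b ≠ ∞ := ENNReal.ofReal_ne_top
  have hle1 : ∀ A : Set X, a * P₁ A ≤ P A := fun A => (hmix' A) ▸ le_self_add
  have hle2 : ∀ A : Set X, b * P₂ A ≤ P A := fun A => (hmix' A) ▸ le_add_self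
  refine iSup₂_le fun r hr => ?_
  rcases eq_or_ne r ∞ with rfl | hrt
  · simp [ENNReal.div_top]
  · calc P (DIS (dball C P h r)) / r
        = (a * P₁ (DIS (dball C P h r)) + b * P₂ (DIS (dball C P h r))) / r := by
          rw [hmix']
      _ = a * P₁ (DIS (dball C P h r)) / r + b * P₂ (DIS (dball C P h r)) / r :=
          ENNReal.add_div
      _ ≤ dcoef C P₁ h + dcoef C P₂ h :=
          add_le_add (aux_term P P₁ C h a haT hle1 r hr hrt)
            (aux_term P P₂ C h b hbT hle2 r hr hrt)
end

section
/- Let C₁, C₂ be hypothesis classes and h a measurable classifier with h ∉ C₁ ∩ C₂ allowed. Let θ_h^(1), θ_h^(2), θ_h be the disagreement coefficients of h with respect to C₁, C₂, and C₁ ∪ C₂ under a distribution D on X. Then θ_h ≤ θ_h^(1) + θ_h^(2) + 2. -/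
/-! If `x` lies outside `DIS V₁`, `DIS V₂` and `{g₁ ≠ g₂}` for some `g₁ ∈ V₁`, `g₂ ∈ V₂`, then every
classifier of `V₁ ∪ V₂` agrees with `g₁` at `x`. Applied to the balls of radius `r` in `C₁` and
`C₂`, this bounds the disagreement region of the ball in `C₁ ∪ C₂` by those of the two balls plus
a set of measure at most `2r` (triangle inequality through `h`); dividing by `r` gives the
coefficient bound. -/

open MeasureTheory ENNReal Set

section Disagreement

variable {X : Type*}

lemma DIS_union_subset {V₁ V₂ : Set (X → Bool)} {g₁ g₂ : X → Bool} (hg₁ : g₁ ∈ V₁)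
    (hg₂ : g₂ ∈ V₂) : DIS (V₁ ∪ V₂) ⊆ DIS V₁ ∪ DIS V₂ ∪ {x | g₁ x ≠ g₂ x} := by
  rintro x ⟨f₁, hf₁, f₂, hf₂, hne⟩
  by_contra hx
  simp only [DIS, mem_union, mem_ofPred_eq, not_or, not_exists, not_and, not_not] at hx
  obtain ⟨⟨hV₁, hV₂⟩, hg₁₂⟩ := hx
  have agree_g₁ : ∀ f ∈ V₁ ∪ V₂, f x = g₁ x := by
    rintro f (hf | hf)
    · exact hV₁ f hf g₁ hg₁
    · rw [hV₂ f hf g₂ hg₂, hg₁₂]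
  exact hne ((agree_g₁ f₁ hf₁).trans (agree_g₁ f₂ hf₂).symm)

lemma measure_setOf_ne_le_add [MeasurableSpace X] (μ : Measure X) (h g₁ g₂ : X → Bool) :
    μ {x | g₁ x ≠ g₂ x} ≤ μ {x | h x ≠ g₁ x} + μ {x | h x ≠ g₂ x} := by
  refine (measure_mono fun x hx => ?_).trans (measure_union_le _ _)
  by_contra hx'
  simp only [mem_union, mem_ofPred_eq, not_or, not_not] at hx'
  exact hx (hx'.1.symm.trans hx'.2)

section Ball

variable [MeasurableSpace X] (C C₁ C₂ : Set (X → Bool)) (μ : Measure X) (h : X → Bool)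

lemma dball_union (r : ℝ≥0∞) : dball (C₁ ∪ C₂) μ h r = dball C₁ μ h r ∪ dball C₂ μ h r := by
  ext g
  simp only [dball, mem_union, mem_ofPred_eq]
  tauto

lemma measure_DIS_div_le_dcoef {r : ℝ≥0∞} (hr : 0 < r) :
    μ (DIS (dball C μ h r)) / r ≤ dcoef C μ h :=
  le_iSup₂ (f := fun r (_ : 0 < r) => μ (DIS (dball C μ h r)) / r) r hr

lemma measure_DIS_dball_union_le (r : ℝ≥0∞) :
    μ (DIS (dball (C₁ ∪ C₂) μ h r)) ≤
      μ (DIS (dball C₁ μ h r)) + μ (DIS (dball C₂ μ h r)) + 2 * r := by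
  rw [dball_union]
  set V₁ := dball C₁ μ h r
  set V₂ := dball C₂ μ h r
  rcases V₁.eq_empty_or_nonempty with hV₁ | ⟨g₁, hg₁⟩
  · rw [hV₁, empty_union]
    exact le_add_right le_add_self
  rcases V₂.eq_empty_or_nonempty with hV₂ | ⟨g₂, hg₂⟩
  · rw [hV₂, union_empty]
    exact le_add_right le_self_add
  have cross : μ {x | g₁ x ≠ g₂ x} ≤ 2 * r :=
    calc μ {x | g₁ x ≠ g₂ x} ≤ μ {x | h x ≠ g₁ x} + μ {x | h x ≠ g₂ x} :=
          measure_setOf_ne_le_add μ h g₁ g₂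
      _ ≤ r + r := add_le_add hg₁.2 hg₂.2
      _ = 2 * r := (two_mul r).symm
  calc μ (DIS (V₁ ∪ V₂)) ≤ μ (DIS V₁ ∪ DIS V₂ ∪ {x | g₁ x ≠ g₂ x}) :=
        measure_mono (DIS_union_subset hg₁ hg₂)
    _ ≤ μ (DIS V₁) + μ (DIS V₂) + μ {x | g₁ x ≠ g₂ x} :=
        (measure_union_le _ _).trans (add_le_add_left (measure_union_le _ _) _)
    _ ≤ μ (DIS V₁) + μ (DIS V₂) + 2 * r := add_le_add_right cross _

end Ball

end Disagreement

theorem union_disagreement_coefficient_general_general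
    {X : Type*} [MeasurableSpace X]
    (D : Measure X)
    (C₁ C₂ : Set (X → Bool)) (h : X → Bool) :
    dcoef (C₁ ∪ C₂) D h ≤ dcoef C₁ D h + dcoef C₂ D h + 2 := by
  refine iSup₂_le fun r hr => ?_
  calc D (DIS (dball (C₁ ∪ C₂) D h r)) / r
      ≤ (D (DIS (dball C₁ D h r)) + D (DIS (dball C₂ D h r)) + 2 * r) / r := by
        gcongr
        exact measure_DIS_dball_union_le C₁ C₂ D h r
    _ = D (DIS (dball C₁ D h r)) / r + D (DIS (dball C₂ D h r)) / r + 2 * r / r := by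
        rw [ENNReal.add_div, ENNReal.add_div]
    _ ≤ dcoef C₁ D h + dcoef C₂ D h + 2 := by
        gcongr
        · exact measure_DIS_div_le_dcoef C₁ D h hr
        · exact measure_DIS_div_le_dcoef C₂ D h hr
        · exact ENNReal.div_le_of_le_mul le_rfl

/-- Finite unions, general case (`h` need not be in `C₁ ∩ C₂`):
`θ_h ≤ θ_h^(1) + θ_h^(2) + 2`. -/
theorem union_disagreement_coefficient_general
    {X : Type*} [MeasurableSpace X]
    (D : Measure X) [IsProbabilityMeasure D]
    (C₁ C₂ : Set (X → Bool)) (h : X → Bool) :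
    dcoef (C₁ ∪ C₂) D h ≤ dcoef C₁ D h + dcoef C₂ D h + 2 :=
  union_disagreement_coefficient_general_general D C₁ C₂ h
end

section
/- Let X = [0,1] with the uniform distribution, and let C be the class of interval classifiers h_{[a,b]} with 0 < a < b < 1, where h_{[a,b]}(x) = +1 iff x ∈ [a,b]. Then for every 0 < a < b < 1, the disagreement coefficient of h_{[a,b]} with respect to C satisfies θ_{h_{[a,b]}} = max{1/(b-a), 4}. -/
open MeasureTheory ENNReal Set

/-- Interval classifier `h_{[a,b]}`: `+1` iff `x ∈ [a,b]`. -/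
noncomputable def hinterval (a b : ℝ) : ℝ → Bool := fun x => decide (x ∈ Set.Icc a b)

/-! For `r < b - a`, a classifier `h_{[a',b']}` in the `r`-ball around `h_{[a,b]}` must meet
`[a,b]`, and then the gaps between corresponding endpoints lie in the disagreement set, so
`|a - a'|, |b - b'| ≤ r`. Hence `DIS` of the ball lies in the `r`-neighbourhoods of `a` and `b`,
of measure `≤ 4r`, and for small `r` it fills them. For `r > b - a` the ball contains every
sufficiently short interval, so `DIS` is all of `(0,1)` and the ratio is `1/r`, whose supremum
over `r > b - a` is `1/(b - a)`. -/

open scoped symmDiff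

namespace Set

variable {α : Type*} [LinearOrder α] {a b a' b' : α}

theorem Icc_symmDiff_Icc_subset (a b a' b' : α) :
    Icc a b ∆ Icc a' b' ⊆ uIcc a a' ∪ uIcc b b' := by
  intro x
  simp only [mem_symmDiff, mem_Icc, mem_union, mem_uIcc]
  grind

theorem uIoo_left_subset_Icc_symmDiff_Icc (h : a ≤ b') (h' : a' ≤ b) :
    uIoo a a' ⊆ Icc a b ∆ Icc a' b' := by
  intro x
  simp only [uIoo, mem_Ioo, mem_symmDiff, mem_Icc]
  grind

theorem uIoo_right_subset_Icc_symmDiff_Icc (h : a ≤ b') (h' : a' ≤ b) :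
    uIoo b b' ⊆ Icc a b ∆ Icc a' b' := by
  intro x
  simp only [uIoo, mem_Ioo, mem_symmDiff, mem_Icc]
  grind

end Set

section Lebesgue

variable {a b a' b' t : ℝ}

theorem volume_Icc_symmDiff_Icc_le_add (a b a' b' : ℝ) :
    volume (Icc a b ∆ Icc a' b') ≤ ENNReal.ofReal (b - a) + ENNReal.ofReal (b' - a') :=
  calc volume (Icc a b ∆ Icc a' b') ≤ volume (Icc a b ∪ Icc a' b') :=
        measure_mono symmDiff_subset_union
    _ ≤ ENNReal.ofReal (b - a) + ENNReal.ofReal (b' - a') := by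
        simpa only [Real.volume_Icc] using measure_union_le (μ := volume) (Icc a b) (Icc a' b')

theorem volume_Icc_symmDiff_Icc_le_abs (a b a' b' : ℝ) :
    volume (Icc a b ∆ Icc a' b') ≤ ENNReal.ofReal (|a - a'| + |b - b'|) :=
  calc volume (Icc a b ∆ Icc a' b') ≤ volume (uIcc a a' ∪ uIcc b b') :=
        measure_mono (Icc_symmDiff_Icc_subset a b a' b')
    _ ≤ ENNReal.ofReal (|a - a'| + |b - b'|) := by
        rw [ofReal_add (abs_nonneg _) (abs_nonneg _), abs_sub_comm a, abs_sub_comm b]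
        simpa only [Real.volume_interval] using
          measure_union_le (μ := volume) (uIcc a a') (uIcc b b')

theorem abs_sub_le_of_volume_Icc_symmDiff_Icc_le (ht : 0 ≤ t) (htba : t < b - a)
    (h : volume (Icc a b ∆ Icc a' b') ≤ ENNReal.ofReal t) : |a - a'| ≤ t ∧ |b - b'| ≤ t := by
  have hle : ∀ s ⊆ Icc a b ∆ Icc a' b', volume s ≤ ENNReal.ofReal t :=
    fun s hs => (measure_mono hs).trans h
  obtain ⟨x, ⟨hax, hxb⟩, ha'x, hxb'⟩ : (Icc a b ∩ Icc a' b').Nonempty := by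
    by_contra hdisj
    rw [← not_disjoint_iff_nonempty_inter, not_not] at hdisj
    have := hle (Icc a b) (hdisj.symmDiff_eq_sup ▸ subset_union_left)
    rw [Real.volume_Icc, ofReal_le_ofReal_iff ht] at this
    linarith
  have hab' : a ≤ b' := hax.trans hxb'
  have ha'b : a' ≤ b := ha'x.trans hxb
  constructor
  · have := hle _ (uIoo_left_subset_Icc_symmDiff_Icc hab' ha'b)
    rwa [Real.volume_uIoo, ofReal_le_ofReal_iff ht, abs_sub_comm] at this
  · have := hle _ (uIoo_right_subset_Icc_symmDiff_Icc hab' ha'b)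
    rwa [Real.volume_uIoo, ofReal_le_ofReal_iff ht, abs_sub_comm] at this

theorem volume_Icc_union_Icc_le (a b t : ℝ) :
    volume (Icc (a - t) (a + t) ∪ Icc (b - t) (b + t)) ≤ 4 * ENNReal.ofReal t := by
  refine (measure_union_le _ _).trans_eq ?_
  rw [Real.volume_Icc, Real.volume_Icc, show a + t - (a - t) = 2 * t by ring,
    show b + t - (b - t) = 2 * t by ring, ofReal_mul zero_le_two, ← add_mul]
  norm_num

theorem volume_Ioo_union_Ioo (h : a + t ≤ b - t) :
    volume (Ioo (a - t) (a + t) ∪ Ioo (b - t) (b + t)) = 4 * ENNReal.ofReal t := by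
  rw [measure_union ((Iic_disjoint_Ioi h).mono (Ioo_subset_Iio_self.trans Iio_subset_Iic_self)
      Ioo_subset_Ioi_self) measurableSet_Ioo, Real.volume_Ioo, Real.volume_Ioo,
    show a + t - (a - t) = 2 * t by ring, show b + t - (b - t) = 2 * t by ring,
    ofReal_mul zero_le_two, ← add_mul]
  norm_num

end Lebesgue

theorem ENNReal.one_div_ofReal_le_of_forall_lt {t : ℝ} {y : ℝ≥0∞}
    (h : ∀ s, t < s → 1 / ENNReal.ofReal s ≤ y) : 1 / ENNReal.ofReal t ≤ y := by
  simp only [one_div] at h ⊢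
  exact le_of_tendsto ((ENNReal.continuous_ofReal.inv.tendsto t).mono_left nhdsWithin_le_nhds)
    (eventually_nhdsWithin_of_forall (s := Ioi t) h)

theorem DIS_subset_biUnion {X : Type*} (V : Set (X → Bool)) (h : X → Bool) :
    DIS V ⊆ ⋃ h' ∈ V, {x | h x ≠ h' x} := by
  rintro x ⟨h₁, h₁V, h₂, h₂V, hne⟩
  by_cases hx : h x = h₁ x
  · exact mem_biUnion h₂V (show h x ≠ h₂ x from hx ▸ hne)
  · exact mem_biUnion h₁V hx

theorem le_dcoef {X : Type*} [MeasurableSpace X] (C : Set (X → Bool)) (μ : Measure X)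
    (h : X → Bool) {r : ℝ≥0∞} (hr : 0 < r) : μ (DIS (dball C μ h r)) / r ≤ dcoef C μ h :=
  le_iSup₂ (f := fun r (_ : 0 < r) => μ (DIS (dball C μ h r)) / r) r hr

def intervalClass : Set (ℝ → Bool) :=
  {f | ∃ a' b' : ℝ, 0 < a' ∧ a' < b' ∧ b' < 1 ∧ f = hinterval a' b'}

noncomputable def uniform01 : Measure ℝ := volume.restrict (Icc 0 1)

instance : IsProbabilityMeasure uniform01 :=
  ⟨by simp [uniform01]⟩

theorem setOf_hinterval_ne (a b a' b' : ℝ) :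
    {x | hinterval a b x ≠ hinterval a' b' x} = Icc a b ∆ Icc a' b' := by
  ext x
  simp only [hinterval, mem_ofPred_eq, ne_eq, decide_eq_decide, mem_symmDiff]
  tauto

theorem hinterval_apply_ne {a b a' b' x : ℝ} (h : x ∈ Icc a b) (h' : x ∉ Icc a' b') :
    hinterval a b x ≠ hinterval a' b' x := by
  simp [hinterval, h, h']

section IntervalClass

variable {a b c d t : ℝ}

theorem hinterval_mem_dball {r : ℝ≥0∞} (hc : 0 < c) (hcd : c < d) (hd : d < 1)
    (h : volume (Icc a b ∆ Icc c d) ≤ r) :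
    hinterval c d ∈ dball intervalClass uniform01 (hinterval a b) r :=
  ⟨⟨c, d, hc, hcd, hd, rfl⟩, by
    rw [setOf_hinterval_ne]; exact (Measure.restrict_apply_le _ _).trans h⟩

theorem uniform01_Icc_symmDiff_Icc_eq_volume (ha : 0 ≤ a) (hb : b ≤ 1) (hc : 0 ≤ c)
    (hd : d ≤ 1) :
    uniform01 (Icc a b ∆ Icc c d) = volume (Icc a b ∆ Icc c d) :=
  Measure.restrict_eq_self _ <| symmDiff_subset_union.trans <|
    union_subset (Icc_subset_Icc ha hb) (Icc_subset_Icc hc hd)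

theorem DIS_dball_subset (ha : 0 < a) (hb : b < 1) (ht : 0 ≤ t) (htba : t < b - a) :
    DIS (dball intervalClass uniform01 (hinterval a b) (ENNReal.ofReal t)) ⊆
      Icc (a - t) (a + t) ∪ Icc (b - t) (b + t) := by
  refine (DIS_subset_biUnion _ (hinterval a b)).trans (iUnion₂_subset ?_)
  rintro _ ⟨⟨c, d, hc, hcd, hd, rfl⟩, hdist⟩
  rw [setOf_hinterval_ne, uniform01_Icc_symmDiff_Icc_eq_volume ha.le hb.le hc.le hd.le] at hdist
  rw [setOf_hinterval_ne]
  obtain ⟨hac, hbd⟩ := abs_sub_le_of_volume_Icc_symmDiff_Icc_le ht htba hdist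
  rw [mem_Icc_iff_abs_le] at hac hbd
  exact (Icc_symmDiff_Icc_subset a b c d).trans <| union_subset_union
    (uIcc_subset_Icc ⟨by linarith, by linarith⟩ hac)
    (uIcc_subset_Icc ⟨by linarith, by linarith⟩ hbd)

theorem Ioo_union_Ioo_subset_DIS_dball (hta : t ≤ a) (htb : t ≤ 1 - b) (hab : a + t ≤ b - t) :
    Ioo (a - t) (a + t) ∪ Ioo (b - t) (b + t) ⊆
      DIS (dball intervalClass uniform01 (hinterval a b) (ENNReal.ofReal t)) := by
  have hmem (c d : ℝ) (hc : 0 < c) (hcd : c < d) (hd : d < 1) (h : |a - c| + |b - d| ≤ t) :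
      hinterval c d ∈ dball intervalClass uniform01 (hinterval a b) (ENNReal.ofReal t) :=
    hinterval_mem_dball hc hcd hd ((volume_Icc_symmDiff_Icc_le_abs a b c d).trans
      (ofReal_le_ofReal h))
  -- Near `a`, move the left endpoint to `x` or just past `x`; near `b`, the right endpoint.
  rintro x (⟨hx₁, hx₂⟩ | ⟨hx₁, hx₂⟩)
  · refine ⟨hinterval x b, hmem x b ?_ ?_ ?_ ?_, hinterval ((x + (a + t)) / 2) b,
      hmem _ b ?_ ?_ ?_ ?_, hinterval_apply_ne ?_ ?_⟩
    all_goals try simp only [sub_self, abs_zero, add_zero, abs_le, mem_Icc, not_and_or, not_le]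
    all_goals first | linarith | (constructor <;> linarith)
  · refine ⟨hinterval a x, hmem a x ?_ ?_ ?_ ?_, hinterval a ((x + (b - t)) / 2),
      hmem a _ ?_ ?_ ?_ ?_, hinterval_apply_ne ?_ ?_⟩
    all_goals try simp only [sub_self, abs_zero, zero_add, abs_le, mem_Icc, not_and_or, not_le]
    all_goals first | linarith | (constructor <;> linarith) | (right; linarith)

theorem Ioo_subset_DIS_dball {s : ℝ} (hab : a ≤ b) (hs : b - a < s) :
    Ioo 0 1 ⊆ DIS (dball intervalClass uniform01 (hinterval a b) (ENNReal.ofReal s)) := by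
  rintro x ⟨hx₀, hx₁⟩
  obtain ⟨e, he₀, hes, hex, hex'⟩ : ∃ e > 0, 2 * e ≤ s - (b - a) ∧ 2 * e < x ∧ e < 1 - x := by
    have hm : 0 < min (s - (b - a)) (min x (1 - x)) :=
      lt_min (by linarith) (lt_min hx₀ (by linarith))
    refine ⟨min (s - (b - a)) (min x (1 - x)) / 3, by positivity, ?_, ?_, ?_⟩ <;>
      linarith [min_le_left (s - (b - a)) (min x (1 - x)), min_le_right x (1 - x),
        min_le_left x (1 - x), min_le_right (s - (b - a)) (min x (1 - x))]
  have hmem (c d : ℝ) (hc : 0 < c) (hcd : c < d) (hd : d < 1) (h : d - c ≤ 2 * e) :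
      hinterval c d ∈ dball intervalClass uniform01 (hinterval a b) (ENNReal.ofReal s) :=
    hinterval_mem_dball hc hcd hd <| (volume_Icc_symmDiff_Icc_le_add a b c d).trans <| by
      rw [← ofReal_add (by linarith) (by linarith)]
      exact ofReal_le_ofReal (by linarith)
  -- `x` lies in a short interval around it but not in the one just to its left
  refine ⟨hinterval (x - e) (x + e), hmem _ _ ?_ ?_ ?_ ?_, hinterval (x - 2 * e) (x - e),
    hmem _ _ ?_ ?_ ?_ ?_, hinterval_apply_ne ?_ ?_⟩
  all_goals try simp only [mem_Icc, not_and_or, not_le]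
  all_goals first | linarith | (constructor <;> linarith) | (right; linarith)

theorem uniform01_DIS_dball_le (ha : 0 < a) (hb : b < 1) {r : ℝ≥0∞}
    (hr : r < ENNReal.ofReal (b - a)) :
    uniform01 (DIS (dball intervalClass uniform01 (hinterval a b) r)) ≤ 4 * r := by
  obtain ⟨t, ht, rfl⟩ : ∃ t, 0 ≤ t ∧ r = ENNReal.ofReal t :=
    ⟨r.toReal, toReal_nonneg, (ofReal_toReal hr.ne_top).symm⟩
  have htba : t < b - a := (ofReal_lt_ofReal_iff_of_nonneg ht).1 hr
  calc _ ≤ uniform01 (Icc (a - t) (a + t) ∪ Icc (b - t) (b + t)) :=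
        measure_mono (DIS_dball_subset ha hb ht htba)
    _ ≤ volume (Icc (a - t) (a + t) ∪ Icc (b - t) (b + t)) := Measure.restrict_apply_le _ _
    _ ≤ 4 * ENNReal.ofReal t := volume_Icc_union_Icc_le a b t

theorem four_mul_le_uniform01_DIS_dball (hta : t ≤ a) (htb : t ≤ 1 - b) (hab : a + t ≤ b - t) :
    4 * ENNReal.ofReal t ≤
      uniform01 (DIS (dball intervalClass uniform01 (hinterval a b) (ENNReal.ofReal t))) := by
  have hsub : Ioo (a - t) (a + t) ∪ Ioo (b - t) (b + t) ⊆ Icc 0 1 := by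
    rintro x (⟨hx₁, hx₂⟩ | ⟨hx₁, hx₂⟩) <;> constructor <;> linarith
  calc 4 * ENNReal.ofReal t = volume (Ioo (a - t) (a + t) ∪ Ioo (b - t) (b + t)) :=
        (volume_Ioo_union_Ioo hab).symm
    _ = uniform01 (Ioo (a - t) (a + t) ∪ Ioo (b - t) (b + t)) :=
        (Measure.restrict_eq_self _ hsub).symm
    _ ≤ _ := measure_mono (Ioo_union_Ioo_subset_DIS_dball hta htb hab)

theorem uniform01_DIS_dball_eq_one {s : ℝ} (hab : a ≤ b) (hs : b - a < s) :
    uniform01 (DIS (dball intervalClass uniform01 (hinterval a b) (ENNReal.ofReal s))) = 1 := by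
  refine le_antisymm prob_le_one ?_
  calc 1 = uniform01 (Ioo 0 1) := by
        rw [uniform01, Measure.restrict_eq_self _ Ioo_subset_Icc_self, Real.volume_Ioo]
        norm_num
    _ ≤ _ := measure_mono (Ioo_subset_DIS_dball hab hs)

end IntervalClass

/-- For intervals on `[0,1]` with the uniform distribution, the disagreement
coefficient of `h_{[a,b]}` equals `max{1/(b−a), 4}`. -/
theorem interval_disagreement_coefficient (a b : ℝ) (ha : 0 < a) (hab : a < b) (hb : b < 1) :
    dcoef {f | ∃ a' b' : ℝ, 0 < a' ∧ a' < b' ∧ b' < 1 ∧ f = hinterval a' b'}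
      (volume.restrict (Set.Icc (0:ℝ) 1)) (hinterval a b)
      = max (1 / ENNReal.ofReal (b - a)) 4 := by
  change dcoef intervalClass uniform01 (hinterval a b) = _
  apply le_antisymm
  · refine iSup₂_le fun r hr => ?_
    rcases lt_or_ge r (ENNReal.ofReal (b - a)) with hsmall | hlarge
    · calc _ ≤ 4 * r / r := by gcongr; exact uniform01_DIS_dball_le ha hb hsmall
        _ = 4 := ENNReal.mul_div_cancel_right hr.ne' hsmall.ne_top
        _ ≤ _ := le_max_right _ _
    · calc _ ≤ 1 / r := by gcongr; exact prob_le_one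
        _ ≤ 1 / ENNReal.ofReal (b - a) := by gcongr
        _ ≤ _ := le_max_left _ _
  · refine max_le ?_ ?_
    · refine ENNReal.one_div_ofReal_le_of_forall_lt fun s hs => ?_
      rw [← uniform01_DIS_dball_eq_one hab.le hs]
      exact le_dcoef _ _ _ (ofReal_pos.2 (by linarith))
    · obtain ⟨t, ht, hta, htb, htab⟩ : ∃ t, 0 < t ∧ t ≤ a ∧ t ≤ 1 - b ∧ a + t ≤ b - t :=
        ⟨min (min a (1 - b)) ((b - a) / 2), lt_min (lt_min ha (by linarith)) (by linarith),
          (min_le_left _ _).trans (min_le_left _ _), (min_le_left _ _).trans (min_le_right _ _),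
          by linarith [min_le_right (min a (1 - b)) ((b - a) / 2)]⟩
      have ht' : ENNReal.ofReal t ≠ 0 := (ofReal_pos.2 ht).ne'
      calc 4 = 4 * ENNReal.ofReal t / ENNReal.ofReal t :=
            (ENNReal.mul_div_cancel_right ht' ofReal_ne_top).symm
        _ ≤ _ := by gcongr; exact four_mul_le_uniform01_DIS_dball hta htb htab
        _ ≤ _ := le_dcoef _ _ _ (ofReal_pos.2 ht)
end

section
/- In the setting of the realizable-case analysis of Algorithm 0: suppose V' ⊆ V ⊆ C are version spaces with f ∈ V', er(f) = 0, and sup_{h∈V'} er(h | DIS(V)) ≤ 1/(2θ_f), where θ_f < ∞ is the disagreement coefficient of f. Then P(DIS(V')) ≤ P(DIS(V))/2. -/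
open MeasureTheory ENNReal Set

lemma map_fst_le_aux {X : Type*} [MeasurableSpace X] (D : Measure (X × Bool)) (s : Set X) :
    (D.map Prod.fst) s ≤ D (Prod.fst ⁻¹' s) := by
  set U := toMeasurable D (Prod.fst ⁻¹' s) with hUdef
  have hUmeas : MeasurableSet U := measurableSet_toMeasurable _ _
  set T := (fun x => (x, true)) ⁻¹' U ∩ (fun x => (x, false)) ⁻¹' U with hTdef
  have hTmeas : MeasurableSet T :=
    (hUmeas.preimage measurable_prodMk_right).inter (hUmeas.preimage measurable_prodMk_right)
  have hsT : s ⊆ T := by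
    intro x hx
    constructor
    · exact subset_toMeasurable D _ (show ((x, true) : X × Bool).1 ∈ s from hx)
    · exact subset_toMeasurable D _ (show ((x, false) : X × Bool).1 ∈ s from hx)
  calc (D.map Prod.fst) s ≤ (D.map Prod.fst) T := measure_mono hsT
    _ = D (Prod.fst ⁻¹' T) := Measure.map_apply measurable_fst hTmeas
    _ ≤ D U := by
        refine measure_mono ?_
        rintro ⟨x, b⟩ ⟨h1, h2⟩
        cases b
        · exact h2
        · exact h1
    _ = D (Prod.fst ⁻¹' s) := measure_toMeasurable _

/-- Halving step in the realizable-case analysis of Algorithm 0: if `f ∈ V' ⊆ V ⊆ C`,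
`er(f) = 0`, and every `h ∈ V'` has conditional error at most `1/(2θ_f)` given
`DIS(V)`, then `P(DIS(V')) ≤ P(DIS(V))/2`. -/
theorem cal_halving_step
    {X : Type*} [MeasurableSpace X]
    (D : Measure (X × Bool)) [IsProbabilityMeasure D]
    (C V V' : Set (X → Bool)) (hV'V : V' ⊆ V) (hVC : V ⊆ C)
    (f : X → Bool) (hf : f ∈ V') (hferr : D {p | f p.1 ≠ p.2} = 0)
    (θ : ℝ) (hθpos : 0 < θ)
    (hθ : dcoef C (D.map Prod.fst) f = ENNReal.ofReal θ)
    (hsup : ∀ h ∈ V',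
      (D {p | h p.1 ≠ p.2 ∧ p.1 ∈ DIS V}).toReal / ((D.map Prod.fst) (DIS V)).toReal
        ≤ 1 / (2*θ)) :
    (D.map Prod.fst) (DIS V') ≤ (D.map Prod.fst) (DIS V) / 2 := by
  set μ := D.map Prod.fst with hμdef
  have hμprob : IsProbabilityMeasure μ := Measure.isProbabilityMeasure_map measurable_fst.aemeasurable
  have hDISmono : DIS V' ⊆ DIS V := by
    rintro x ⟨h₁, h₁m, h₂, h₂m, hne⟩
    exact ⟨h₁, hV'V h₁m, h₂, hV'V h₂m, hne⟩
  by_cases ha0 : μ (DIS V) = 0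
  · calc μ (DIS V') ≤ μ (DIS V) := measure_mono hDISmono
      _ ≤ μ (DIS V) / 2 := by simp [ha0]
  · set a := μ (DIS V) with hadef
    have haT : a ≠ ∞ := measure_ne_top μ _
    have hatR : 0 < a.toReal := ENNReal.toReal_pos ha0 haT
    have h2θpos : (0:ℝ) < 2 * θ := by linarith
    set r := a / ENNReal.ofReal (2 * θ) with hrdef
    have hofR0 : ENNReal.ofReal (2 * θ) ≠ 0 := by
      simp [ENNReal.ofReal_eq_zero]; linarith
    have hofRT : ENNReal.ofReal (2 * θ) ≠ ∞ := ofReal_ne_top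
    have hr0 : 0 < r := ENNReal.div_pos ha0 hofRT
    have hrT : r ≠ ∞ := by
      simp only [hrdef]
      exact (ENNReal.div_lt_top haT hofR0).ne
    -- every h ∈ V' is in the ball of radius r
    have hball : V' ⊆ dball C μ f r := by
      intro h hh
      refine ⟨hVC (hV'V hh), ?_⟩
      set B := {p : X × Bool | h p.1 ≠ p.2 ∧ p.1 ∈ DIS V} with hBdef
      have hBr : D B ≤ r := by
        have h1 := hsup h hh
        rw [div_le_iff₀ hatR] at h1
        have h2 : (D B).toReal ≤ a.toReal / (2 * θ) := by
          rw [div_eq_mul_inv, mul_comm]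
          calc (D B).toReal ≤ 1 / (2*θ) * a.toReal := h1
            _ = (2*θ)⁻¹ * a.toReal := by rw [one_div]
        calc D B = ENNReal.ofReal (D B).toReal := (ENNReal.ofReal_toReal (measure_ne_top D _)).symm
          _ ≤ ENNReal.ofReal (a.toReal / (2 * θ)) := ENNReal.ofReal_le_ofReal h2
          _ = ENNReal.ofReal a.toReal / ENNReal.ofReal (2 * θ) := ENNReal.ofReal_div_of_pos h2θpos
          _ = r := by rw [ENNReal.ofReal_toReal haT]
      have hsub : Prod.fst ⁻¹' {x | f x ≠ h x} ⊆ B ∪ {p : X × Bool | f p.1 ≠ p.2} := by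
        rintro ⟨x, b⟩ hx
        by_cases hb : h x = b
        · right
          simpa [hb] using hx
        · left
          exact ⟨hb, f, hV'V hf, h, hV'V hh, hx⟩
      calc μ {x | f x ≠ h x} ≤ D (Prod.fst ⁻¹' {x | f x ≠ h x}) := map_fst_le_aux D _
        _ ≤ D B + D {p : X × Bool | f p.1 ≠ p.2} := (measure_mono hsub).trans (measure_union_le _ _)
        _ = D B := by rw [hferr, add_zero]
        _ ≤ r := hBr
    -- use the disagreement coefficient
    have hdc : μ (DIS (dball C μ f r)) / r ≤ ENNReal.ofReal θ := by
      rw [← hθ, dcoef]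
      exact le_iSup₂ (f := fun (r : ℝ≥0∞) (_ : 0 < r) => μ (DIS (dball C μ f r)) / r) r hr0
    have hkey : μ (DIS V') ≤ ENNReal.ofReal θ * r := by
      have h1 : μ (DIS V') ≤ μ (DIS (dball C μ f r)) := by
        refine measure_mono ?_
        rintro x ⟨h₁, h₁m, h₂, h₂m, hne⟩
        exact ⟨h₁, hball h₁m, h₂, hball h₂m, hne⟩
      have h2 : μ (DIS (dball C μ f r)) ≤ ENNReal.ofReal θ * r :=
        (ENNReal.div_le_iff hr0.ne' hrT).mp hdc
      exact h1.trans h2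
    have hfinal : ENNReal.ofReal θ * r = a / 2 := by
      rw [hrdef, ENNReal.ofReal_mul (by norm_num : (0:ℝ) ≤ 2)]
      rw [ENNReal.div_eq_inv_mul, ENNReal.mul_inv (Or.inl (by simp)) (Or.inl ofReal_ne_top)]
      have hθ0 : ENNReal.ofReal θ ≠ 0 := by simp [ENNReal.ofReal_eq_zero]; linarith
      calc ENNReal.ofReal θ * ((ENNReal.ofReal 2)⁻¹ * (ENNReal.ofReal θ)⁻¹ * a)
          = (ENNReal.ofReal θ * (ENNReal.ofReal θ)⁻¹) * ((ENNReal.ofReal 2)⁻¹ * a) := by ring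
        _ = (ENNReal.ofReal 2)⁻¹ * a := by rw [ENNReal.mul_inv_cancel hθ0 ofReal_ne_top, one_mul]
        _ = a / 2 := by
            rw [ENNReal.div_eq_inv_mul]
            norm_num
    rw [hfinal] at hkey
    exact hkey
end

section
/- Let θ = liminf_{k→∞} θ_{h^[k]} be the class disagreement coefficient, where er(h^[k]) ↓ ν, and fix P > 0. If V ⊆ C is such that every h ∈ V satisfies limsup_{k→∞} P_X(h(X) ≠ h^[k](X)) ≤ P/(2θ), then P_X(DIS(V)) ≤ P/2. -/
open MeasureTheory ENNReal Set

open Filter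

/-- If `θ = liminf_k θ_{h^[k]}` (where `er(h^[k]) ↓ ν`) and every `h ∈ V` satisfies
`limsup_k P(h ≠ h^[k]) ≤ P/(2θ)`, then `P(DIS(V)) ≤ P/2`. -/
theorem dis_measure_from_limsup_condition
    {X : Type*} [MeasurableSpace X]
    (D : Measure (X × Bool)) [IsProbabilityMeasure D]
    (C : Set (X → Bool)) (ν : ℝ)
    (hk : ℕ → X → Bool) (hkC : ∀ k, hk k ∈ C)
    (hmono : Antitone fun k => (D {p | hk k p.1 ≠ p.2}).toReal)
    (hlim : Tendsto (fun k => (D {p | hk k p.1 ≠ p.2}).toReal) atTop (nhds ν))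
    (hν : ∀ h ∈ C, ν ≤ (D {p | h p.1 ≠ p.2}).toReal)
    (θ : ℝ≥0∞)
    (hθ : θ = liminf (fun k => dcoef C (D.map Prod.fst) (hk k)) atTop)
    (hθpos : 0 < θ) (hθfin : θ ≠ ⊤)
    (P : ℝ≥0∞) (hP : 0 < P)
    (V : Set (X → Bool)) (hVC : V ⊆ C)
    (hV : ∀ h ∈ V,
      limsup (fun k => (D.map Prod.fst) {x | h x ≠ hk k x}) atTop ≤ P / (2*θ)) :
    (D.map Prod.fst) (DIS V) ≤ P / 2 := by
  classical
  set μ := D.map Prod.fst with hμ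
  -- trivial case P = ⊤
  rcases eq_or_ne P ⊤ with rfl | hPfin
  · simp [ENNReal.top_div]
  -- key step: bound by θ * c' for any finite c' > P/(2θ)
  have key : ∀ c' : ℝ≥0∞, P / (2*θ) < c' → c' ≠ ⊤ → μ (DIS V) ≤ θ * c' := by
    intro c' hc' hc'top
    have hc'0 : c' ≠ 0 := by
      intro h; rw [h] at hc'; exact (not_lt_bot hc')
    -- the increasing family
    set W : ℕ → Set (X → Bool) :=
      fun K => {h ∈ V | ∀ k, K ≤ k → μ {x | h x ≠ hk k x} ≤ c'} with hW
    have hWmono : Monotone W := by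
      intro a b hab h hh
      exact ⟨hh.1, fun k hk => hh.2 k (hab.trans hk)⟩
    have hdir : Directed (· ⊆ ·) fun K => DIS (W K) := by
      intro a b
      refine ⟨max a b, ?_, ?_⟩
      · intro x ⟨h₁, h1m, h₂, h2m, hne⟩
        exact ⟨h₁, hWmono (le_max_left a b) h1m, h₂, hWmono (le_max_left a b) h2m, hne⟩
      · intro x ⟨h₁, h1m, h₂, h2m, hne⟩
        exact ⟨h₁, hWmono (le_max_right a b) h1m, h₂, hWmono (le_max_right a b) h2m, hne⟩
    -- DIS V is the union of the DIS (W K)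
    have hcover : DIS V = ⋃ K, DIS (W K) := by
      apply Set.Subset.antisymm
      · rintro x ⟨h₁, h1m, h₂, h2m, hne⟩
        have e1 : ∀ᶠ k in atTop, μ {x | h₁ x ≠ hk k x} < c' :=
          eventually_lt_of_limsup_lt (lt_of_le_of_lt (hV h₁ h1m) hc')
        have e2 : ∀ᶠ k in atTop, μ {x | h₂ x ≠ hk k x} < c' :=
          eventually_lt_of_limsup_lt (lt_of_le_of_lt (hV h₂ h2m) hc')
        obtain ⟨K, hK⟩ := (e1.and e2).exists_forall_of_atTop
        refine Set.mem_iUnion.2 ⟨K, h₁, ⟨h1m, fun k hk => ((hK k hk).1).le⟩,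
          h₂, ⟨h2m, fun k hk => ((hK k hk).2).le⟩, hne⟩
      · refine Set.iUnion_subset fun K => ?_
        rintro x ⟨h₁, h1m, h₂, h2m, hne⟩
        exact ⟨h₁, h1m.1, h₂, h2m.1, hne⟩
    -- each piece has measure ≤ θ * c'
    have hpiece : ∀ K, μ (DIS (W K)) ≤ θ * c' := by
      intro K
      have hball : ∀ k, K ≤ k → W K ⊆ dball C μ (hk k) c' := by
        intro k hKk h hh
        refine ⟨hVC hh.1, ?_⟩
        have : {x | hk k x ≠ h x} = {x | h x ≠ hk k x} := by
          ext x; exact ne_comm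
        rw [this]
        exact hh.2 k hKk
      have hdis : ∀ k, K ≤ k → μ (DIS (W K)) ≤ μ (DIS (dball C μ (hk k) c')) := by
        intro k hKk
        apply measure_mono
        rintro x ⟨h₁, h1m, h₂, h2m, hne⟩
        exact ⟨h₁, hball k hKk h1m, h₂, hball k hKk h2m, hne⟩
      have hcoef : ∀ k, K ≤ k → μ (DIS (W K)) / c' ≤ dcoef C μ (hk k) := by
        intro k hKk
        calc μ (DIS (W K)) / c' ≤ μ (DIS (dball C μ (hk k) c')) / c' :=
              ENNReal.div_le_div_right (hdis k hKk) _
          _ ≤ dcoef C μ (hk k) := by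
              refine le_iSup₂ (f := fun r (_ : 0 < r) => μ (DIS (dball C μ (hk k) r)) / r)
                c' ?_
              exact zero_lt_iff.2 hc'0
      have hliminf : μ (DIS (W K)) / c' ≤ θ := by
        rw [hθ]
        have : liminf (fun _ : ℕ => μ (DIS (W K)) / c') atTop ≤
            liminf (fun k => dcoef C μ (hk k)) atTop :=
          liminf_le_liminf (eventually_atTop.2 ⟨K, hcoef⟩)
        simpa using this
      exact (ENNReal.div_le_iff_le_mul (Or.inl hc'0) (Or.inr hθpos.ne')).1 hliminf
    rw [hcover, hdir.measure_iUnion]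
    exact iSup_le hpiece
  -- now take c' → P/(2θ)
  have hc0 : P / (2*θ) ≠ ⊤ := by
    exact (ENNReal.div_lt_top hPfin (by simp [hθpos.ne'])).ne
  have hmain : θ * (P / (2*θ)) = P / 2 := by
    rw [ENNReal.div_eq_inv_mul, ENNReal.mul_inv (Or.inl two_ne_zero) (Or.inl ENNReal.ofNat_ne_top),
      ENNReal.div_eq_inv_mul]
    calc θ * (2⁻¹ * θ⁻¹ * P) = (θ * θ⁻¹) * (2⁻¹ * P) := by ring
      _ = 2⁻¹ * P := by rw [ENNReal.mul_inv_cancel hθpos.ne' hθfin, one_mul]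
  refine ENNReal.le_of_forall_pos_le_add fun ε hε hfin => ?_
  have hεθ : (0 : ℝ≥0∞) < ε / θ := ENNReal.div_pos (by exact_mod_cast hε.ne') hθfin
  have hlt : P / (2*θ) < P / (2*θ) + ε / θ :=
    ENNReal.lt_add_right hc0 hεθ.ne'
  have hfin' : P / (2*θ) + ε / θ ≠ ⊤ := by
    apply ENNReal.add_ne_top.2
    exact ⟨hc0, (ENNReal.div_lt_top (by simp) hθpos.ne').ne⟩
  have := key _ hlt hfin'
  calc μ (DIS V) ≤ θ * (P / (2*θ) + ε / θ) := this
    _ = θ * (P / (2*θ)) + θ * (ε / θ) := by rw [mul_add]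
    _ = P / 2 + θ * (ε / θ) := by rw [hmain]
    _ ≤ P / 2 + ε := by
        gcongr
        rw [ENNReal.div_eq_inv_mul, ← mul_assoc, ENNReal.mul_inv_cancel hθpos.ne' hθfin,
          one_mul]
end
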